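/- arXiv:1807.01920 — 3 statements merged into one kernel-verified Lean document; each statement's English description precedes it below -/
import Mathlib

section
/- Let p > c+3 be a prime, and for a nonempty set P ⊆ {1,…,(p−1)/2} let H_P be the circulant graph on vertex set Z_p with edge set {{x, x+i} : x ∈ Z_p, i ∈ P}. Then H_P is (c+1)-edge-connected if and only if #P > ⌊c/2⌋. -/
/-- The circulant graph `H_P` on vertex set `ZMod p`: `x` and `y` are adjacent iff they are
distinct and differ by some `i ∈ P`. -/
def circulantGraph (p : ℕ) (P : Finset ℕ) : SimpleGraph (ZMod p) :=
  SimpleGraph.fromRel (fun x y => ∃ i ∈ P, y - x = (i : ZMod p))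

private lemma natCast_ne_zero_of (p i : ℕ) (h1 : 1 ≤ i) (h2 : i < p) : (i : ZMod p) ≠ 0 := by
  intro h
  have := (ZMod.natCast_eq_zero_iff i p).mp h
  have := Nat.le_of_dvd (by omega) this
  omega

/-- Key connectivity lemma: if at most one deleted edge lies on the Hamilton cycle of step `i`,
and that edge (if any) is `s(a, a+i)`, then the graph minus `s` is connected. -/
private lemma aux_conn (p : ℕ) (hp : p.Prime) (hp3 : 3 < p) (P : Finset ℕ)
    (hPsub : P ⊆ Finset.Icc 1 ((p - 1) / 2)) {i : ℕ} (hi : i ∈ P)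
    (s : Finset (Sym2 (ZMod p))) (a : ZMod p)
    (hs : ∀ e ∈ s, (∀ x : ZMod p, e ≠ s(x, x + (i : ZMod p))) ∨ e = s(a, a + (i : ZMod p))) :
    ((circulantGraph p P).deleteEdges ↑s).Connected := by
  haveI : Fact p.Prime := ⟨hp⟩
  haveI : NeZero p := ⟨hp.pos.ne'⟩
  set G' := (circulantGraph p P).deleteEdges ↑s with hG'
  obtain ⟨hi1, hi2⟩ := Finset.mem_Icc.mp (hPsub hi)
  have hilt : i < p := by omega
  have hiz : (i : ZMod p) ≠ 0 := natCast_ne_zero_of p i hi1 hilt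
  -- step adjacency
  have hadj : ∀ m : ℕ, 1 ≤ m → m < p → G'.Adj (a + (m : ZMod p) * i) (a + ((m : ZMod p) + 1) * i) := by
    intro m hm1 hm2
    rw [hG', SimpleGraph.deleteEdges_adj]
    constructor
    · rw [circulantGraph, SimpleGraph.fromRel_adj]
      refine ⟨fun h => hiz (by linear_combination -h), Or.inl ⟨i, hi, by ring⟩⟩
    · rw [Finset.mem_coe]
      intro hmem
      rcases hs _ hmem with h | h
      · exact h (a + (m : ZMod p) * i) (by rw [Sym2.eq_iff]; left; exact ⟨rfl, by ring⟩)
      · rw [Sym2.eq_iff] at h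
        rcases h with ⟨h1, _⟩ | ⟨h1, h2⟩
        · -- a + m*i = a  ⇒  p ∣ m, contradiction
          have : (m : ZMod p) * i = 0 := by
            have := sub_eq_zero.mpr h1; calc (m : ZMod p) * i = (a + (m:ZMod p)*i) - a := by ring
              _ = 0 := this
          have hm0 : (m : ZMod p) = 0 := by
            rcases mul_eq_zero.mp this with h | h
            · exact h
            · exact absurd h hiz
          have := (ZMod.natCast_eq_zero_iff m p).mp hm0
          have := Nat.le_of_dvd (by omega) this
          omega
        · -- a + m*i = a + i  and  a + (m+1)*i = a  ⇒  2 = 0 in ZMod p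
          have e1 : (m : ZMod p) * i = 1 * i := by
            have := sub_eq_zero.mpr h1
            calc (m : ZMod p) * i = ((a + (m:ZMod p)*i) - (a + i)) + i := by ring
              _ = 1 * i := by rw [this]; ring
          have e2 : ((m : ZMod p) + 1) * i = 0 := by
            have := sub_eq_zero.mpr h2
            calc ((m:ZMod p) + 1) * i = (a + ((m:ZMod p)+1)*i) - a := by ring
              _ = 0 := this
          have hm1' : (m : ZMod p) = 1 := mul_right_cancel₀ hiz e1
          have hm2' : (m : ZMod p) + 1 = 0 := by
            rcases mul_eq_zero.mp e2 with h | h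
            · exact h
            · exact absurd h hiz
          have h2z : ((2 : ℕ) : ZMod p) = 0 := by
            push_cast
            linear_combination hm2' - hm1'
          have := (ZMod.natCast_eq_zero_iff 2 p).mp h2z
          have := Nat.le_of_dvd (by omega) this
          omega
  -- reachability along the cycle
  have reach : ∀ k : ℕ, k < p → G'.Reachable (a + i) (a + ((k : ZMod p) + 1) * i) := by
    intro k
    induction k with
    | zero =>
      intro _
      have e : a + ((((0:ℕ)) : ZMod p) + 1) * i = a + i := by push_cast; ring
      rw [e]
    | succ k ih =>
      intro hk
      have h1 : G'.Reachable (a + i) (a + ((k : ZMod p) + 1) * i) := ih (by omega)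
      have h2 := hadj (k + 1) (by omega) hk
      have : G'.Adj (a + ((k:ZMod p) + 1) * i) (a + (((k+1 : ℕ) : ZMod p) + 1) * i) := by
        have e1 : (((k+1 : ℕ) : ZMod p)) = (k : ZMod p) + 1 := by push_cast; ring
        rw [e1]
        convert h2 using 3 <;> push_cast <;> ring
      exact h1.trans this.reachable
  have reach' : ∀ v : ZMod p, G'.Reachable (a + i) v := by
    intro v
    set m := ((v - a) * (i : ZMod p)⁻¹).val with hm
    have hmv : ((m : ZMod p)) = (v - a) * (i : ZMod p)⁻¹ := by
      rw [hm, ZMod.natCast_val, ZMod.cast_id]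
    have hmi : (m : ZMod p) * i = v - a := by
      rw [hmv, mul_assoc, inv_mul_cancel₀ hiz, mul_one]
    have hmp : m < p := ZMod.val_lt _
    rcases Nat.eq_zero_or_pos m with h0 | h1
    · -- v = a ; use k = p - 1
      have hv : v = a := by
        have : (v - a) = 0 := by rw [← hmi, h0]; push_cast; ring
        have := sub_eq_zero.mp this; rw [this]
      have := reach (p - 1) (by omega)
      have e : a + (((p-1 : ℕ) : ZMod p) + 1) * i = v := by
        have : (((p-1 : ℕ) : ZMod p) + 1) = ((p : ℕ) : ZMod p) := by
          have : ((p - 1 : ℕ) : ZMod p) + ((1:ℕ) : ZMod p) = ((p : ℕ) : ZMod p) := by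
            rw [← Nat.cast_add]; congr 1; omega
          simpa using this
        rw [this, ZMod.natCast_self, hv]; ring
      rw [e] at this; exact this
    · have := reach (m - 1) (by omega)
      have e : a + (((m-1 : ℕ) : ZMod p) + 1) * i = v := by
        have h' : ((m - 1 : ℕ) : ZMod p) + 1 = (m : ZMod p) := by
          have : ((m - 1 : ℕ) : ZMod p) + ((1:ℕ) : ZMod p) = ((m : ℕ) : ZMod p) := by
            rw [← Nat.cast_add]; congr 1; omega
          simpa using this
        rw [h', hmi]; ring
      rw [e] at this; exact this
  rw [SimpleGraph.connected_iff]
  exact ⟨fun u v => (reach' u).symm.trans (reach' v), inferInstance⟩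

/-- Let `p > c+3` be a prime and `∅ ≠ P ⊆ {1,…,(p-1)/2}`. The circulant graph
`H_P` on `ZMod p` is `(c+1)`-edge-connected (i.e. stays connected after deleting any set of at
most `c` edges) iff `#P > ⌊c/2⌋`. -/
theorem stmt_4 (p c : ℕ) (hp : p.Prime) (hpc : c + 3 < p)
    (P : Finset ℕ) (hP : P.Nonempty) (hPsub : P ⊆ Finset.Icc 1 ((p - 1) / 2)) :
    (∀ s : Finset (Sym2 (ZMod p)), s.card < c + 1 →
        ((circulantGraph p P).deleteEdges ↑s).Connected)
      ↔ c / 2 < P.card := by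
  classical
  haveI : Fact p.Prime := ⟨hp⟩
  haveI : NeZero p := ⟨hp.pos.ne'⟩
  constructor
  · -- connectivity ⇒ |P| > c/2, by contraposition
    intro hconn
    by_contra hcard
    push_neg at hcard
    -- delete all edges at 0
    set s : Finset (Sym2 (ZMod p)) :=
      P.image (fun i : ℕ => s((0 : ZMod p), ((i : ℕ) : ZMod p))) ∪
      P.image (fun i : ℕ => s((0 : ZMod p), (-((i : ℕ) : ZMod p)))) with hsdef
    have hscard : s.card < c + 1 := by
      have h1 := Finset.card_union_le (P.image (fun i : ℕ => s((0 : ZMod p), ((i : ℕ) : ZMod p))))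
        (P.image (fun i : ℕ => s((0 : ZMod p), (-((i : ℕ) : ZMod p)))))
      rw [hsdef]
      have h2 := Finset.card_image_le (s := P) (f := fun i : ℕ => s((0 : ZMod p), ((i : ℕ) : ZMod p)))
      have h3 := Finset.card_image_le (s := P) (f := fun i : ℕ => s((0 : ZMod p), (-((i : ℕ) : ZMod p))))
      omega
    have hC := hconn s hscard
    set G' := (circulantGraph p P).deleteEdges ↑s with hG'
    have hiso : ∀ v : ZMod p, ¬ G'.Adj 0 v := by
      intro v hv
      rw [hG', SimpleGraph.deleteEdges_adj] at hv
      obtain ⟨hadj, hnot⟩ := hv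
      rw [circulantGraph, SimpleGraph.fromRel_adj] at hadj
      obtain ⟨hne, hrel⟩ := hadj
      apply hnot
      rw [Finset.mem_coe, hsdef, Finset.mem_union]
      rcases hrel with ⟨j, hj, hrel⟩ | ⟨j, hj, hrel⟩
      · left
        rw [Finset.mem_image]
        refine ⟨j, hj, ?_⟩
        have : v = (j : ZMod p) := by rw [← hrel]; ring
        rw [this]
      · right
        rw [Finset.mem_image]
        refine ⟨j, hj, ?_⟩
        have : v = -(j : ZMod p) := by rw [← hrel]; ring
        rw [this]
    have key : ∀ (u : ZMod p) (w : G'.Walk 0 u), u = 0 := by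
      intro u w
      cases w with
      | nil => rfl
      | cons h _ => exact absurd h (hiso _)
    obtain ⟨w⟩ := hC.preconnected 0 1
    have := key 1 w
    have h1 : (1 : ZMod p) ≠ 0 := one_ne_zero
    exact h1 this
  · -- |P| > c/2 ⇒ connectivity
    intro hcard s hscard
    -- edges of s on cycle i
    set S : ℕ → Finset (Sym2 (ZMod p)) :=
      fun i => s.filter (fun e => ∃ x : ZMod p, e = s(x, x + (i : ZMod p))) with hSdef
    have hdisj : ∀ i ∈ P, ∀ j ∈ P, i ≠ j → Disjoint (S i) (S j) := by
      intro i hiP j hjP hij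
      obtain ⟨hi1, hi2⟩ := Finset.mem_Icc.mp (hPsub hiP)
      obtain ⟨hj1, hj2⟩ := Finset.mem_Icc.mp (hPsub hjP)
      rw [Finset.disjoint_left]
      intro e hei hej
      rw [hSdef, Finset.mem_filter] at hei hej
      obtain ⟨-, x, hx⟩ := hei
      obtain ⟨-, y, hy⟩ := hej
      rw [hx, Sym2.eq_iff] at hy
      rcases hy with ⟨h1, h2⟩ | ⟨h1, h2⟩
      · -- x = y, x + i = y + j ⇒ i = j
        apply hij
        have : (i : ZMod p) = (j : ZMod p) := by
          rw [h1] at h2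
          exact add_left_cancel h2
        have := (ZMod.natCast_eq_natCast_iff i j p).mp this
        have h5 := Nat.ModEq.eq_of_lt_of_lt this (by omega) (by omega)
        exact h5
      · -- x = y + j, x + i = y ⇒ p ∣ i + j, impossible
        have : ((i + j : ℕ) : ZMod p) = 0 := by
          push_cast
          have : y + (j : ZMod p) + i = y := by rw [← h1, h2]
          linear_combination this
        have := (ZMod.natCast_eq_zero_iff (i + j) p).mp this
        have := Nat.le_of_dvd (by omega) this
        omega
    have hex : ∃ i ∈ P, (S i).card ≤ 1 := by
      by_contra hno
      push_neg at hno
      have hsum : ∑ i ∈ P, (S i).card = (P.biUnion S).card :=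
        (Finset.card_biUnion hdisj).symm
      have hsub : P.biUnion S ⊆ s := by
        intro e he
        rw [Finset.mem_biUnion] at he
        obtain ⟨i, -, he⟩ := he
        exact Finset.mem_of_mem_filter e he
      have h1 : 2 * P.card ≤ ∑ i ∈ P, (S i).card := by
        calc 2 * P.card = ∑ _i ∈ P, 2 := by simp [Finset.sum_const, mul_comm]
          _ ≤ ∑ i ∈ P, (S i).card := Finset.sum_le_sum (fun i hi => hno i hi)
      have h2 : (P.biUnion S).card ≤ s.card := Finset.card_le_card hsub
      have h3 : c < 2 * P.card := by omega
      omega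
    obtain ⟨i, hiP, hS1⟩ := hex
    -- get the anchor a
    have hget : ∃ a : ZMod p, ∀ e ∈ s,
        (∀ x : ZMod p, e ≠ s(x, x + (i : ZMod p))) ∨ e = s(a, a + (i : ZMod p)) := by
      rcases Finset.eq_empty_or_nonempty (S i) with hemp | ⟨e₀, he₀⟩
      · refine ⟨0, fun e he => Or.inl fun x hx => ?_⟩
        have : e ∈ S i := by
          rw [hSdef, Finset.mem_filter]; exact ⟨he, x, hx⟩
        rw [hemp] at this
        exact absurd this (Finset.notMem_empty e)
      · have he₀' := he₀
        rw [hSdef, Finset.mem_filter] at he₀'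
        obtain ⟨-, a, ha⟩ := he₀'
        refine ⟨a, fun e he => ?_⟩
        by_cases hcyc : ∃ x : ZMod p, e = s(x, x + (i : ZMod p))
        · right
          have heS : e ∈ S i := by
            rw [hSdef, Finset.mem_filter]; exact ⟨he, hcyc⟩
          have := Finset.card_le_one.mp hS1 e heS e₀ he₀
          rw [this, ← ha]
        · left
          push_neg at hcyc
          exact hcyc
    obtain ⟨a, ha⟩ := hget
    exact aux_conn p hp (by omega) P hPsub hiP s a ha
end

section
/- Let F be a fixed connected graph on f ≥ 2 vertices, and let k ≥ f be a natural number with k ≡ 0 or 1 (mod f). Write k = l·f + a with a ∈ {0,1} and l = ⌊k/f⌋. Then Σ_G (−1)^{#E(G)} = (−1)^{l+1} (−1)^{l·#E(F)} · (k!/((f!)^l · l!)) · (f!/#Aut(F))^l, where the sum ranges over all graphs G on the labeled vertex set {1,…,k} containing at least one connected component isomorphic to F. -/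
/-!
Inclusion–exclusion over the vertex sets of `F`-components turns the sum into an alternating
sum, over nonempty families `P` of vertex sets, of the signed count of graphs in which every
member of `P` is an `F`-component. Since `F` is connected, such members are pairwise disjoint
`f`-sets, and the signed count factorises: each member contributes `(-1)^#E(F)` times the number
`f!/#Aut(F)` of labelled copies of `F` on it, and the rest is the signed count of all graphs on
the remaining vertices, which vanishes unless at most one vertex is left, i.e. unless `P`
consists of exactly `l` blocks. There are `k!/((f!)^l l!)` such families.
-/

open scoped Classical

/-- `G` contains a connected component (an isolated subgraph) isomorphic to `F`: there is a
vertex set `s` closed under adjacency whose induced subgraph is isomorphic to `F`. -/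
def hasIsoComponent {V α : Type} (G : SimpleGraph V) (F : SimpleGraph α) : Prop :=
  ∃ s : Finset V, (∀ u ∈ s, ∀ v : V, G.Adj u v → v ∈ s) ∧
    Nonempty (G.induce ↑s ≃g F)

open Finset

namespace SimpleGraph

variable {V : Type*}

def restrict (G : SimpleGraph V) (s : Set V) : SimpleGraph V where
  Adj u v := G.Adj u v ∧ u ∈ s ∧ v ∈ s
  symm := ⟨fun _ _ h => ⟨h.1.symm, h.2.2, h.2.1⟩⟩
  loopless := ⟨fun _ h => G.loopless.irrefl _ h.1⟩

@[simp]
theorem restrict_adj {G : SimpleGraph V} {s : Set V} {u v : V} :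
    (G.restrict s).Adj u v ↔ G.Adj u v ∧ u ∈ s ∧ v ∈ s := Iff.rfl

theorem support_subset_iff_le_restrict_top {G : SimpleGraph V} {s : Set V} :
    G.support ⊆ s ↔ G ≤ (⊤ : SimpleGraph V).restrict s :=
  ⟨fun h _ _ huv => ⟨huv.ne, h ⟨_, huv⟩, h ⟨_, huv.symm⟩⟩, fun h _ ⟨_, huv⟩ => (h huv).2.1⟩

theorem restrict_top_eq_bot_iff {s : Set V} :
    (⊤ : SimpleGraph V).restrict s = ⊥ ↔ s.Subsingleton := by
  refine ⟨fun h u hu v hv => ?_, fun h => ?_⟩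
  · by_contra huv
    have : ((⊤ : SimpleGraph V).restrict s).Adj u v := ⟨huv, hu, hv⟩
    simp [h] at this
  · ext u v
    simp only [restrict_adj, top_adj, bot_adj, iff_false, not_and]
    exact fun huv hu hv => huv (h hu hv)

theorem map_subtype_adj {s : Set V} {H : SimpleGraph s} {u v : V} :
    (H.map (Function.Embedding.subtype _)).Adj u v ↔
      ∃ (hu : u ∈ s) (hv : v ∈ s), H.Adj ⟨u, hu⟩ ⟨v, hv⟩ := by
  rw [map_adj]
  constructor
  · rintro ⟨⟨u, hu⟩, ⟨v, hv⟩, h, rfl, rfl⟩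
    exact ⟨hu, hv, h⟩
  · rintro ⟨hu, hv, h⟩
    exact ⟨_, _, h, rfl, rfl⟩

theorem map_induce (G : SimpleGraph V) (s : Set V) :
    (G.induce s).map (Function.Embedding.subtype _) = G.restrict s := by
  ext u v
  rw [map_subtype_adj, restrict_adj]
  exact ⟨fun ⟨hu, hv, h⟩ => ⟨h, hu, hv⟩, fun ⟨h, hu, hv⟩ => ⟨hu, hv, h⟩⟩

theorem sum_neg_one_pow_card_edgeSet_le [Fintype V] [DecidableEq V] (H : SimpleGraph V) :
    ∑ G ∈ univ.filter (· ≤ H), (-1 : ℤ) ^ Nat.card G.edgeSet = if H = ⊥ then 1 else 0 := by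
  simp only [Nat.card_eq_fintype_card, ← edgeFinset_card]
  have himage : (univ.filter (· ≤ H)).image (fun G => G.edgeFinset) = H.edgeFinset.powerset := by
    ext A
    simp only [mem_image, mem_filter, mem_univ, true_and, mem_powerset]
    refine ⟨fun ⟨G, hG, hA⟩ => hA ▸ edgeFinset_subset_edgeFinset.mpr hG, fun hA => ?_⟩
    have hA' : (A : Set (Sym2 V)) ⊆ H.edgeSet := by simpa [← coe_subset] using hA
    have hedges : (fromEdgeSet (A : Set (Sym2 V))).edgeSet = A := by
      rw [edgeSet_fromEdgeSet, sdiff_eq_left]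
      exact Set.subset_compl_iff_disjoint_right.mp (hA'.trans H.edgeSet_subset_compl_diagSet)
    refine ⟨fromEdgeSet A, ?_, ?_⟩
    · rw [← edgeSet_subset_edgeSet, hedges]
      exact hA'
    · exact coe_injective (by rw [coe_edgeFinset, hedges])
  calc _ = ∑ A ∈ H.edgeFinset.powerset, (-1 : ℤ) ^ #A := by
        rw [← himage, sum_image fun _ _ _ _ h => edgeFinset_inj.mp h]
    _ = _ := by rw [sum_powerset_neg_one_pow_card]; simp

theorem card_edgeSet_sup_of_disjoint [Finite V] {G₁ G₂ : SimpleGraph V} (h : Disjoint G₁ G₂) :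
    Nat.card (G₁ ⊔ G₂).edgeSet = Nat.card G₁.edgeSet + Nat.card G₂.edgeSet := by
  simp only [Nat.card_coe_set_eq, edgeSet_sup]
  exact Set.ncard_union_eq (disjoint_edgeSet.mpr h)

theorem card_edgeSet_map {W : Type*} (f : V ↪ W) (G : SimpleGraph V) :
    Nat.card (G.map f).edgeSet = Nat.card G.edgeSet := by
  simp only [Nat.card_coe_set_eq, edgeSet_map]
  exact Set.ncard_image_of_injective _ f.sym2Map.injective

section Split

variable {G G' : SimpleGraph V} {s : Set V} {H : SimpleGraph s}

theorem restrict_sup_restrict_compl (hs : ∀ u ∈ s, ∀ v, G.Adj u v → v ∈ s) :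
    G.restrict s ⊔ G.restrict sᶜ = G := by
  ext u v
  simp only [sup_adj, restrict_adj, Set.mem_compl_iff]
  by_cases hu : u ∈ s
  · exact ⟨by tauto, fun h => .inl ⟨h, hu, hs u hu v h⟩⟩
  · exact ⟨by tauto, fun h => .inr ⟨h, hu, fun hv => hu (hs v hv u h.symm)⟩⟩

theorem restrict_compl_adj_iff (hs : ∀ u ∈ s, ∀ v, G.Adj u v → v ∈ s) {u v : V} (hu : u ∉ s) :
    (G.restrict sᶜ).Adj u v ↔ G.Adj u v :=
  ⟨fun h => h.1, fun h => ⟨h, hu, fun hv => hu (hs v hv u h.symm)⟩⟩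

theorem map_subtype_sup_adj_of_notMem {u v : V} (hu : u ∉ s) :
    (H.map (Function.Embedding.subtype _) ⊔ G').Adj u v ↔ G'.Adj u v := by
  rw [sup_adj, map_subtype_adj]
  exact ⟨fun h => h.resolve_left fun ⟨hu', _⟩ => hu hu', .inr⟩

theorem induce_map_subtype_sup (hG' : Disjoint G'.support s) :
    (H.map (Function.Embedding.subtype _) ⊔ G').induce s = H := by
  ext ⟨u, hu⟩ ⟨v, hv⟩
  change (H.map (Function.Embedding.subtype _) ⊔ G').Adj u v ↔ _
  rw [sup_adj, map_subtype_adj]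
  exact ⟨fun h => h.elim (fun ⟨_, _, h⟩ => h) fun h => (hG'.notMem_of_mem_right hu ⟨v, h⟩).elim,
    fun h => .inl ⟨hu, hv, h⟩⟩

theorem restrict_compl_map_subtype_sup (hG' : Disjoint G'.support s) :
    (H.map (Function.Embedding.subtype _) ⊔ G').restrict sᶜ = G' := by
  ext u v
  rw [restrict_adj]
  refine ⟨fun ⟨h, hu, _⟩ => (map_subtype_sup_adj_of_notMem hu).mp h, fun h => ?_⟩
  have hu : u ∉ s := hG'.notMem_of_mem_left ⟨v, h⟩
  exact ⟨(map_subtype_sup_adj_of_notMem hu).mpr h, hu, hG'.notMem_of_mem_left ⟨u, h.symm⟩⟩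

theorem disjoint_map_subtype (hG' : Disjoint G'.support s) :
    Disjoint (H.map (Function.Embedding.subtype _)) G' := by
  rw [disjoint_iff]
  ext u v
  simp only [inf_adj, map_subtype_adj, bot_adj, iff_false, not_and]
  exact fun ⟨hu, _⟩ h => hG'.notMem_of_mem_right hu ⟨v, h⟩

end Split

section IsoComponent

variable {α : Type*}

def IsIsoComponent (G : SimpleGraph V) (F : SimpleGraph α) (s : Finset V) : Prop :=
  (∀ u ∈ s, ∀ v, G.Adj u v → v ∈ s) ∧ Nonempty (G.induce s ≃g F)

namespace IsIsoComponent

variable {G G' : SimpleGraph V} {F : SimpleGraph α} {s t : Finset V}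

theorem card_eq [Fintype α] (h : G.IsIsoComponent F s) : #s = Fintype.card α := by
  obtain ⟨-, ⟨e⟩⟩ := h
  simpa using Fintype.card_congr e.toEquiv

theorem congr (hadj : ∀ u ∈ s, ∀ v, G.Adj u v ↔ G'.Adj u v) (h : G.IsIsoComponent F s) :
    G'.IsIsoComponent F s := by
  have hinduce : G.induce s = G'.induce s := by
    ext a b
    exact hadj a a.2 b
  exact ⟨fun u hu v huv => h.1 u hu v ((hadj u hu v).mpr huv), hinduce ▸ h.2⟩

theorem subset_of_mem (hF : F.Connected) (hs : G.IsIsoComponent F s)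
    (ht : ∀ u ∈ t, ∀ v, G.Adj u v → v ∈ t) {x : V} (hxs : x ∈ s) (hxt : x ∈ t) : s ⊆ t := by
  obtain ⟨e⟩ := hs.2
  intro y hy
  obtain ⟨p⟩ := (e.connected_iff.mpr hF).preconnected ⟨x, hxs⟩ ⟨y, hy⟩
  suffices ∀ {a b : (s : Set V)}, (G.induce s).Walk a b → (a : V) ∈ t → (b : V) ∈ t from
    this p hxt
  intro a b q
  induction q with
  | nil => exact id
  | cons h _ ih => exact fun ha => ih (ht _ ha _ h)

theorem disjoint (hF : F.Connected) (hs : G.IsIsoComponent F s) (ht : G.IsIsoComponent F t)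
    (hne : s ≠ t) : Disjoint s t :=
  Finset.disjoint_left.mpr fun _ hxs hxt =>
    hne ((hs.subset_of_mem hF ht.1 hxs hxt).antisymm (ht.subset_of_mem hF hs.1 hxt hxs))

end IsIsoComponent

end IsoComponent

section LabelledCopies

variable {α β : Type*} (F : SimpleGraph α)

def comapEqEquivIso (H : SimpleGraph β) : {σ : β ≃ α // F.comap σ = H} ≃ (H ≃g F) where
  toFun σ := ⟨σ.1, fun {a b} => Iff.of_eq (congrArg (·.Adj a b) σ.2)⟩
  invFun e := ⟨e.toEquiv, by ext; exact e.map_rel_iff⟩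
  left_inv _ := rfl
  right_inv _ := rfl

def isoEquivAut {H : SimpleGraph β} (e₀ : H ≃g F) : (H ≃g F) ≃ (F ≃g F) where
  toFun e := e₀.symm.trans e
  invFun f := e₀.trans f
  left_inv e := by ext; simp
  right_inv f := by ext; simp

theorem card_iso_mul_card_aut [Fintype α] [Fintype β] (h : Fintype.card β = Fintype.card α) :
    Nat.card {H : SimpleGraph β // Nonempty (H ≃g F)} * Nat.card (F ≃g F) =
      (Fintype.card α).factorial := by
  rw [Nat.card_eq_fintype_card, Fintype.card_subtype]
  calc _ = ∑ H : SimpleGraph β, Nat.card (H ≃g F) := by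
        rw [card_eq_sum_ones, sum_mul, sum_filter]
        refine sum_congr rfl fun H _ => ?_
        split_ifs with hH
        · rw [one_mul, Nat.card_congr (isoEquivAut F hH.some)]
        · rw [not_nonempty_iff] at hH
          rw [Nat.card_of_isEmpty]
    _ = ∑ H : SimpleGraph β, Nat.card {σ : β ≃ α // F.comap σ = H} :=
        sum_congr rfl fun H _ => (Nat.card_congr (comapEqEquivIso F H)).symm
    _ = Nat.card (β ≃ α) := by
        rw [← Nat.card_sigma, Nat.card_congr (Equiv.sigmaFiberEquiv _)]
    _ = (Fintype.card α).factorial := by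
        rw [Nat.card_eq_fintype_card, Fintype.card_equiv (Fintype.equivOfCardEq h), h]

noncomputable def labelledCopies : ℕ :=
  Nat.card {H : SimpleGraph α // Nonempty (H ≃g F)}

theorem labelledCopies_mul_card_aut [Fintype α] :
    labelledCopies F * Nat.card (F ≃g F) = (Fintype.card α).factorial :=
  card_iso_mul_card_aut F rfl

theorem card_aut_ne_zero [Fintype α] : Nat.card (F ≃g F) ≠ 0 := fun h =>
  (Fintype.card α).factorial_ne_zero (by rw [← labelledCopies_mul_card_aut F, h, mul_zero])

theorem labelledCopies_eq_div [Fintype α] :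
    (labelledCopies F : ℚ) = (Fintype.card α).factorial / Nat.card (F ≃g F) := by
  rw [← labelledCopies_mul_card_aut F, Nat.cast_mul,
    mul_div_cancel_right₀ _ (Nat.cast_ne_zero.mpr (card_aut_ne_zero F))]

theorem card_iso_eq_labelledCopies [Fintype α] [Fintype β]
    (h : Fintype.card β = Fintype.card α) :
    Nat.card {H : SimpleGraph β // Nonempty (H ≃g F)} = labelledCopies F :=
  Nat.eq_of_mul_eq_mul_right (Nat.pos_of_ne_zero (card_aut_ne_zero F))
    ((card_iso_mul_card_aut F h).trans (labelledCopies_mul_card_aut F).symm)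

end LabelledCopies

end SimpleGraph

section Families

variable {V : Type*}

noncomputable def disjointFamilies (W : Finset V) (n m : ℕ) : Finset (Finset (Finset V)) :=
  ((W.powersetCard n).powersetCard m).filter fun P => (P : Set (Finset V)).PairwiseDisjoint id

variable {W s : Finset V} {n m : ℕ} {P : Finset (Finset V)}

theorem mem_disjointFamilies :
    P ∈ disjointFamilies W n m ↔
      (∀ t ∈ P, t ⊆ W ∧ #t = n) ∧ #P = m ∧ (P : Set (Finset V)).PairwiseDisjoint id := by
  simp only [disjointFamilies, mem_filter, mem_powersetCard, subset_iff, and_assoc]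

variable [DecidableEq V]

theorem mul_le_card_of_mem_disjointFamilies (hP : P ∈ disjointFamilies W n m) : m * n ≤ #W := by
  obtain ⟨hPW, rfl, hPd⟩ := mem_disjointFamilies.mp hP
  calc #P * n = #(P.biUnion id) := by
        rw [card_biUnion hPd]
        exact (sum_const_nat fun t ht => (hPW t ht).2).symm
    _ ≤ #W := card_le_card (biUnion_subset.mpr fun t ht => (hPW t ht).1)

theorem erase_mem_disjointFamilies (hP : P ∈ disjointFamilies W n (m + 1)) (hs : s ∈ P) :
    P.erase s ∈ disjointFamilies (W \ s) n m := by
  obtain ⟨hPW, hcard, hPd⟩ := mem_disjointFamilies.mp hP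
  refine mem_disjointFamilies.mpr ⟨fun t ht => ?_, by rw [card_erase_of_mem hs, hcard]; rfl,
    hPd.subset (by simp)⟩
  obtain ⟨hts, ht⟩ := mem_erase.mp ht
  exact ⟨subset_sdiff.mpr ⟨(hPW t ht).1, hPd ht hs hts⟩, (hPW t ht).2⟩

theorem notMem_of_mem_disjointFamilies_sdiff (hn : n ≠ 0) (hs : #s = n)
    (hP : P ∈ disjointFamilies (W \ s) n m) : s ∉ P := by
  intro hsP
  obtain ⟨x, hx⟩ := card_ne_zero.mp (hs.trans_ne hn)
  exact (mem_sdiff.mp (((mem_disjointFamilies.mp hP).1 s hsP).1 hx)).2 hx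

theorem insert_mem_disjointFamilies (hn : n ≠ 0) (hs : s ∈ W.powersetCard n)
    (hP : P ∈ disjointFamilies (W \ s) n m) : insert s P ∈ disjointFamilies W n (m + 1) := by
  obtain ⟨hsW, hsn⟩ := mem_powersetCard.mp hs
  obtain ⟨hPW, hcard, hPd⟩ := mem_disjointFamilies.mp hP
  refine mem_disjointFamilies.mpr ⟨fun t ht => ?_, ?_, ?_⟩
  · rcases mem_insert.mp ht with rfl | ht
    · exact ⟨hsW, hsn⟩
    · exact ⟨(hPW t ht).1.trans sdiff_subset, (hPW t ht).2⟩
  · rw [card_insert_of_notMem (notMem_of_mem_disjointFamilies_sdiff hn hsn hP), hcard]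
  · rw [coe_insert]
    refine hPd.insert fun t ht _ => ?_
    exact (disjoint_sdiff.mono_right (hPW t ht).1)

theorem card_filter_mem_disjointFamilies (hn : n ≠ 0) (hs : s ∈ W.powersetCard n) :
    #((disjointFamilies W n (m + 1)).filter (s ∈ ·)) = #(disjointFamilies (W \ s) n m) := by
  refine card_nbij' (·.erase s) (insert s) (fun P hP => ?_) (fun P hP => ?_)
    (fun P hP => ?_) (fun P hP => ?_)
  · exact erase_mem_disjointFamilies (mem_filter.mp hP).1 (mem_filter.mp hP).2
  · exact mem_filter.mpr ⟨insert_mem_disjointFamilies hn hs hP, mem_insert_self s P⟩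
  · exact insert_erase (mem_filter.mp hP).2
  · exact erase_insert (notMem_of_mem_disjointFamilies_sdiff hn (mem_powersetCard.mp hs).2 hP)

theorem card_disjointFamilies_succ_mul (hn : n ≠ 0) :
    #(disjointFamilies W n (m + 1)) * (m + 1) =
      ∑ s ∈ W.powersetCard n, #(disjointFamilies (W \ s) n m) := by
  calc _ = ∑ P ∈ disjointFamilies W n (m + 1),
          #((W.powersetCard n).bipartiteAbove (fun P t => t ∈ P) P) := by
        rw [← smul_eq_mul, ← sum_const]
        refine sum_congr rfl fun P hP => ?_
        obtain ⟨hPW, hcard, -⟩ := mem_disjointFamilies.mp hP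
        rw [← hcard]
        congr 1
        ext t
        simp only [bipartiteAbove, mem_filter, mem_powersetCard]
        exact ⟨fun h => ⟨hPW t h, h⟩, fun h => h.2⟩
    _ = ∑ s ∈ W.powersetCard n,
          #((disjointFamilies W n (m + 1)).bipartiteBelow (fun P t => t ∈ P) s) :=
        sum_card_bipartiteAbove_eq_sum_card_bipartiteBelow _
    _ = _ := sum_congr rfl fun s hs => card_filter_mem_disjointFamilies hn hs

theorem card_disjointFamilies_mul (hn : n ≠ 0) (h : m * n ≤ #W) :
    #(disjointFamilies W n m) * (n.factorial ^ m * m.factorial) * (#W - m * n).factorial =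
      (#W).factorial := by
  induction m generalizing W with
  | zero => simp [disjointFamilies, filter_singleton]
  | succ m ih =>
    have hnW : n ≤ #W := le_trans (Nat.le_mul_of_pos_left n m.succ_pos) h
    have hsub : #W - (m + 1) * n = #W - n - m * n := by
      rw [Nat.succ_mul, Nat.sub_add_eq, Nat.sub_right_comm]
    have hrest : ∀ s ∈ W.powersetCard n, #(disjointFamilies (W \ s) n m) *
        (n.factorial ^ m * m.factorial) * (#W - n - m * n).factorial = (#W - n).factorial := by
      intro s hs
      obtain ⟨hsW, hsn⟩ := mem_powersetCard.mp hs
      have hcard : #(W \ s) = #W - n := by rw [card_sdiff_of_subset hsW, hsn]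
      rw [← hcard]
      exact ih (by rw [hcard, Nat.le_sub_iff_add_le hnW, ← Nat.succ_mul]; exact h)
    calc _ = #(disjointFamilies W n (m + 1)) * (m + 1) * (n.factorial ^ m * m.factorial) *
          (#W - n - m * n).factorial * n.factorial := by
          rw [hsub, Nat.factorial_succ, pow_succ]; ring
      _ = (#W).choose n * (#W - n).factorial * n.factorial := by
          rw [card_disjointFamilies_succ_mul hn, sum_mul, sum_mul, sum_congr rfl hrest, sum_const,
            card_powersetCard, smul_eq_mul]
      _ = (#W).factorial := by
          rw [mul_right_comm, Nat.choose_mul_factorial_mul_factorial hnW]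

theorem card_disjointFamilies_eq_div {a : ℕ} (hn : n ≠ 0) (hW : #W = m * n + a) (ha : a ≤ 1) :
    (#(disjointFamilies W n m) : ℚ) = (#W).factorial / (n.factorial ^ m * m.factorial) := by
  have h := card_disjointFamilies_mul (W := W) (m := m) hn (by omega)
  rw [hW, Nat.add_sub_cancel_left, Nat.factorial_eq_one.mpr ha, mul_one, ← hW] at h
  rw [← h]
  push_cast
  exact (mul_div_cancel_right₀ _ (by positivity)).symm

end Families

namespace SimpleGraph

theorem mem_disjointFamilies_of_forall_isIsoComponent {V α : Type*} [Fintype V] [Fintype α]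
    {F : SimpleGraph α} (hF : F.Connected)
    {G : SimpleGraph V} {P : Finset (Finset V)} (hG : ∀ s ∈ P, G.IsIsoComponent F s) :
    P ∈ disjointFamilies univ (Fintype.card α) #P :=
  mem_disjointFamilies.mpr ⟨fun s hs => ⟨subset_univ s, (hG s hs).card_eq⟩, rfl,
    fun s hs t ht hne => (hG s hs).disjoint hF (hG t ht) hne⟩

section SignSum

variable {V α : Type*} [Fintype V] [DecidableEq V] (F : SimpleGraph α)

noncomputable def componentSignSum (W : Finset V) (P : Finset (Finset V)) : ℤ :=
  ∑ G ∈ univ.filter (fun G : SimpleGraph V => G.support ⊆ W ∧ ∀ s ∈ P, G.IsIsoComponent F s),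
    (-1) ^ Nat.card G.edgeSet

theorem componentSignSum_insert {W s : Finset V} {Q : Finset (Finset V)} (hsW : s ⊆ W)
    (hQ : ∀ t ∈ Q, Disjoint s t) :
    componentSignSum F W (insert s Q) = (-1) ^ Nat.card F.edgeSet *
      Nat.card {H : SimpleGraph (s : Set V) // Nonempty (H ≃g F)} *
      componentSignSum F (W \ s) Q := by
  set Y := univ.filter fun H : SimpleGraph (s : Set V) => Nonempty (H ≃g F)
  set Z := univ.filter fun G : SimpleGraph V =>
    G.support ⊆ ↑(W \ s) ∧ ∀ t ∈ Q, G.IsIsoComponent F t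
  have hZ : ∀ G' ∈ Z, Disjoint G'.support s := fun G' hG' =>
    Set.disjoint_of_subset_left (mem_filter.mp hG').2.1 (by simp [Set.disjoint_sdiff_left])
  have hsplit : componentSignSum F W (insert s Q) =
      ∑ p ∈ Y ×ˢ Z, (-1) ^ Nat.card p.1.edgeSet * (-1) ^ Nat.card p.2.edgeSet := by
    symm
    refine sum_nbij' (fun p => p.1.map (Function.Embedding.subtype (· ∈ (s : Set V))) ⊔ p.2)
      (fun G => (G.induce s, G.restrict (↑s)ᶜ)) ?_ ?_ ?_ ?_ ?_
    · rintro ⟨H, G'⟩ hp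
      have hd := hZ G' (mem_product.mp hp).2
      obtain ⟨⟨φ⟩, hG'W, hG'Q⟩ := by simpa [Y, Z] using hp
      simp only [mem_filter, mem_univ, true_and, mem_insert, forall_eq_or_imp]
      refine ⟨?_, ⟨?_, ⟨(induce_map_subtype_sup hd).symm ▸ φ⟩⟩, fun t ht => ?_⟩
      · rintro u ⟨v, h | h⟩
        · exact hsW (map_subtype_adj.mp h).1
        · exact (hG'W ⟨v, h⟩).1
      · rintro u hu v (h | h)
        · exact (map_subtype_adj.mp h).2.1
        · exact (hd.notMem_of_mem_right hu ⟨v, h⟩).elim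
      · refine (hG'Q t ht).congr fun u hu v => (map_subtype_sup_adj_of_notMem ?_).symm
        exact disjoint_right.mp (hQ t ht) hu
    · intro G hG
      obtain ⟨hGW, hs, hGQ⟩ := by simpa using hG
      simp only [mem_product, mem_filter, mem_univ, true_and, Y, Z]
      refine ⟨hs.2, fun u ⟨v, h, hu, _⟩ => mem_sdiff.mpr ⟨hGW ⟨v, h⟩, hu⟩, fun t ht => ?_⟩
      refine (hGQ t ht).congr fun u hu v => (restrict_compl_adj_iff hs.1 ?_).symm
      exact disjoint_right.mp (hQ t ht) hu
    · rintro ⟨H, G'⟩ hp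
      have hd := hZ G' (mem_product.mp hp).2
      exact Prod.ext (induce_map_subtype_sup hd) (restrict_compl_map_subtype_sup hd)
    · intro G hG
      obtain ⟨-, hs, -⟩ := by simpa using hG
      rw [map_induce, restrict_sup_restrict_compl hs.1]
    · rintro ⟨H, G'⟩ hp
      have hd := hZ G' (mem_product.mp hp).2
      dsimp only
      rw [← pow_add, card_edgeSet_sup_of_disjoint (disjoint_map_subtype hd), card_edgeSet_map]
  have hY : ∀ H ∈ Y, Nat.card H.edgeSet = Nat.card F.edgeSet := fun H hH =>
    Nat.card_congr (mem_filter.mp hH).2.some.mapEdgeSet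
  calc _ = ∑ H ∈ Y, ∑ G ∈ Z, (-1) ^ Nat.card H.edgeSet * (-1) ^ Nat.card G.edgeSet := by
        rw [hsplit, sum_product]
    _ = ∑ H ∈ Y, (-1) ^ Nat.card F.edgeSet * componentSignSum F (W \ s) Q :=
        sum_congr rfl fun H hH => by rw [← mul_sum, hY H hH]; rfl
    _ = _ := by
        rw [sum_const, nsmul_eq_mul, ← Fintype.card_subtype, ← Nat.card_eq_fintype_card]
        ring

theorem componentSignSum_empty (W : Finset V) :
    componentSignSum F W ∅ = if #W ≤ 1 then 1 else 0 := by
  simp only [componentSignSum, notMem_empty, IsEmpty.forall_iff, implies_true, and_true,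
    support_subset_iff_le_restrict_top]
  rw [sum_neg_one_pow_card_edgeSet_le]
  exact if_congr (restrict_top_eq_bot_iff.trans card_le_one_iff_subsingleton.symm) rfl rfl

-- `#W - m * card α` counts the vertices of `W` outside the blocks: no truncation occurs, by
-- `mul_le_card_of_mem_disjointFamilies`.
theorem componentSignSum_of_mem_disjointFamilies [Fintype α] {W : Finset V} {m : ℕ}
    {P : Finset (Finset V)} (hP : P ∈ disjointFamilies W (Fintype.card α) m) :
    componentSignSum F W P = ((-1) ^ Nat.card F.edgeSet * labelledCopies F) ^ m *
      if #W - m * Fintype.card α ≤ 1 then 1 else 0 := by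
  induction m generalizing W P with
  | zero =>
    rw [card_eq_zero.mp (mem_disjointFamilies.mp hP).2.1, componentSignSum_empty]
    simp
  | succ m ih =>
    obtain ⟨hPW, hcard, hPd⟩ := mem_disjointFamilies.mp hP
    obtain ⟨s, hs⟩ := card_pos.mp (by omega : 0 < #P)
    have hsW := (hPW s hs).1
    have hsQ : ∀ t ∈ P.erase s, Disjoint s t := fun t ht =>
      hPd hs (mem_of_mem_erase ht) (ne_of_mem_erase ht).symm
    rw [← insert_erase hs, componentSignSum_insert F hsW hsQ,
      card_iso_eq_labelledCopies (β := (s : Set V)) F (by simp [(hPW s hs).2]),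
      ih (erase_mem_disjointFamilies hP hs), card_sdiff_of_subset hsW, (hPW s hs).2, Nat.sub_sub,
      add_comm, ← Nat.succ_mul, pow_succ]
    ring

theorem componentSignSum_univ [Fintype α] (hF : F.Connected) (hn : 2 ≤ Fintype.card α)
    {l a : ℕ} (hV : Fintype.card V = l * Fintype.card α + a) (ha : a ≤ 1)
    (P : Finset (Finset V)) :
    componentSignSum F univ P = if P ∈ disjointFamilies univ (Fintype.card α) l then
      ((-1) ^ Nat.card F.edgeSet * labelledCopies F : ℤ) ^ l else 0 := by
  by_cases hP : P ∈ disjointFamilies univ (Fintype.card α) #P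
  · have hle := mul_le_card_of_mem_disjointFamilies hP
    rw [card_univ, hV] at hle
    rw [componentSignSum_of_mem_disjointFamilies F hP, card_univ, hV]
    by_cases hPl : #P = l
    · subst hPl
      rw [if_pos hP, if_pos (by omega), mul_one]
    · have hlt : #P + 1 ≤ l := by
        by_contra h
        have := Nat.mul_le_mul_right (Fintype.card α) (show l + 1 ≤ #P by omega)
        rw [Nat.succ_mul] at this
        omega
      have := Nat.mul_le_mul_right (Fintype.card α) hlt
      rw [Nat.succ_mul] at this
      rw [if_neg (fun h => hPl (mem_disjointFamilies.mp h).2.1), if_neg (by omega), mul_zero]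
  · rw [if_neg fun h => hP ((mem_disjointFamilies.mp h).2.1.symm ▸ h)]
    exact sum_eq_zero fun G hG =>
      (hP (mem_disjointFamilies_of_forall_isIsoComponent hF (mem_filter.mp hG).2.2)).elim

end SignSum

theorem sum_hasIsoComponent_eq_sum_componentSignSum {V α : Type} [Fintype V] [DecidableEq V]
    (F : SimpleGraph α) :
    ∑ G ∈ (univ : Finset (SimpleGraph V)).filter (hasIsoComponent · F),
      (-1 : ℤ) ^ Nat.card G.edgeSet =
      ∑ P ∈ (univ : Finset (Finset (Finset V))).filter (·.Nonempty),
        (-1) ^ (#P + 1) * componentSignSum F univ P := by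
  have hunion : (univ : Finset (SimpleGraph V)).filter (hasIsoComponent · F) =
      (univ : Finset (Finset V)).biUnion fun s => univ.filter (·.IsIsoComponent F s) := by
    ext G
    simp only [mem_filter, mem_univ, true_and, mem_biUnion]
    rfl
  rw [hunion, inclusion_exclusion_sum_biUnion, powerset_univ, ← sum_coe_sort (univ.filter _)]
  refine sum_congr rfl fun P _ => ?_
  rw [smul_eq_mul, componentSignSum]
  congr 2
  ext G
  simp [mem_inf']

theorem sum_hasIsoComponent {V α : Type} [Fintype V] [DecidableEq V] [Fintype α]
    {F : SimpleGraph α} (hF : F.Connected) (hn : 2 ≤ Fintype.card α) {l a : ℕ}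
    (hV : Fintype.card V = l * Fintype.card α + a) (ha : a ≤ 1) (hl : l ≠ 0) :
    ∑ G ∈ (univ : Finset (SimpleGraph V)).filter (hasIsoComponent · F),
        (-1 : ℤ) ^ Nat.card G.edgeSet =
      (-1) ^ (l + 1) * ((-1) ^ Nat.card F.edgeSet * labelledCopies F) ^ l *
        #(disjointFamilies (univ : Finset V) (Fintype.card α) l) := by
  have hsub : disjointFamilies univ (Fintype.card α) l ⊆
      (univ : Finset (Finset (Finset V))).filter (·.Nonempty) :=
    fun P hP => mem_filter.mpr
      ⟨mem_univ _, card_pos.mp (by rw [(mem_disjointFamilies.mp hP).2.1]; omega)⟩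
  rw [sum_hasIsoComponent_eq_sum_componentSignSum,
    sum_congr rfl fun P _ => by rw [componentSignSum_univ F hF hn hV ha P]]
  simp_rw [mul_ite, mul_zero]
  rw [sum_ite_mem, inter_eq_right.mpr hsub,
    sum_congr rfl fun P hP => by rw [(mem_disjointFamilies.mp hP).2.1], sum_const, nsmul_eq_mul]
  ring

end SimpleGraph

/-- Let `F` be a connected graph on `f ≥ 2` vertices, `k ≥ f` with
`k = l·f + a`, `a ∈ {0,1}`, `l = ⌊k/f⌋`. Then the alternating-by-edge-count sum over all
graphs on the labeled vertex set `{1,…,k}` having a connected component isomorphic to `F` is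
`(-1)^{l+1} (-1)^{l·#E(F)} · k!/((f!)^l l!) · (f!/#Aut F)^l`. -/
theorem stmt_16 (f : ℕ) (hf : 2 ≤ f) (F : SimpleGraph (Fin f)) (hFconn : F.Connected)
    (k l a : ℕ) (hk : f ≤ k) (ha : a ≤ 1) (hkla : k = l * f + a) :
    ∑ G ∈ Finset.univ.filter (fun G : SimpleGraph (Fin k) => hasIsoComponent G F),
        ((-1 : ℚ)) ^ (Nat.card G.edgeSet)
      = (-1 : ℚ) ^ (l + 1) * (-1 : ℚ) ^ (l * Nat.card F.edgeSet)
          * ((k.factorial : ℚ) / ((f.factorial : ℚ) ^ l * (l.factorial : ℚ)))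
          * ((f.factorial : ℚ) / (Nat.card (F ≃g F) : ℚ)) ^ l := by
  have hl : l ≠ 0 := by
    rintro rfl
    omega
  have hsum := congrArg (Int.cast : ℤ → ℚ) <| SimpleGraph.sum_hasIsoComponent (V := Fin k)
    hFconn (by simpa using hf) (by simpa using hkla) ha hl
  push_cast at hsum
  rw [Fintype.card_fin] at hsum
  rw [hsum, card_disjointFamilies_eq_div (n := f) (by omega) (by simpa using hkla) ha,
    SimpleGraph.labelledCopies_eq_div, card_univ, Fintype.card_fin, Fintype.card_fin]
  ring
end

section
/- Let F be the graph consisting of a single vertex (f = 1). For k ≥ 2, the sum Σ_G (−1)^{#E(G)} over all graphs G on the labeled vertex set {1,…,k} having at least one isolated vertex equals (−1)^k (k−1); for k = 1 it equals 1. In particular it is nonzero for all k ≥ 1. -/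
open scoped Classical
open Finset SimpleGraph

lemma edge_pow_eq (V : Type*) [Fintype V] (G : SimpleGraph V) :
    ((-1 : ℤ)) ^ (Nat.card G.edgeSet) = (-1 : ℤ) ^ G.edgeFinset.card := by
  rw [SimpleGraph.edgeFinset_card, Nat.card_eq_fintype_card]

lemma sum_le_graph {V : Type*} [Fintype V] [DecidableEq V] (H : SimpleGraph V) :
    ∑ G ∈ Finset.univ.filter (fun G : SimpleGraph V => G ≤ H),
        ((-1 : ℤ)) ^ (Nat.card G.edgeSet)
      = if H = ⊥ then 1 else 0 := by
  classical
  calc ∑ G ∈ Finset.univ.filter (fun G : SimpleGraph V => G ≤ H),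
        ((-1 : ℤ)) ^ (Nat.card G.edgeSet)
      = ∑ s ∈ H.edgeFinset.powerset, (-1 : ℤ) ^ s.card := ?_
    _ = if H.edgeFinset = ∅ then 1 else 0 := Finset.sum_powerset_neg_one_pow_card
    _ = if H = ⊥ then 1 else 0 := by simp [SimpleGraph.edgeFinset_eq_empty]
  refine Finset.sum_nbij' (fun G => G.edgeFinset) (fun s => SimpleGraph.fromEdgeSet ↑s)
    ?_ ?_ ?_ ?_ ?_
  · intro G hG
    simp only [Finset.mem_filter] at hG
    exact Finset.mem_powerset.2 (edgeFinset_mono hG.2)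
  · intro s hs
    simp only [Finset.mem_powerset] at hs
    refine Finset.mem_filter.2 ⟨Finset.mem_univ _, ?_⟩
    calc SimpleGraph.fromEdgeSet ↑s ≤ SimpleGraph.fromEdgeSet H.edgeSet := by
          apply SimpleGraph.fromEdgeSet_mono
          intro e he
          exact SimpleGraph.mem_edgeFinset.1 (hs he)
      _ = H := SimpleGraph.fromEdgeSet_edgeSet H
  · intro G hG
    show SimpleGraph.fromEdgeSet ↑G.edgeFinset = G
    rw [SimpleGraph.coe_edgeFinset, SimpleGraph.fromEdgeSet_edgeSet]
  · intro s hs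
    simp only [Finset.mem_powerset] at hs
    have hdiag : ∀ e ∈ (↑s : Set (Sym2 V)), ¬ e.IsDiag := by
      intro e he
      exact H.not_isDiag_of_mem_edgeSet (SimpleGraph.mem_edgeFinset.1 (hs he))
    ext e
    simp only [SimpleGraph.mem_edgeFinset, SimpleGraph.edgeSet_fromEdgeSet, Set.mem_diff,
      Set.mem_setOf_eq, Finset.mem_coe]
    exact ⟨fun h => h.1, fun h => ⟨h, hdiag e h⟩⟩
  · intro G hG
    exact edge_pow_eq V G

/-- the graph where all vertices of `S` are isolated and the rest form a clique -/
def isoGraph {V : Type*} (S : Finset V) : SimpleGraph V :=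
  SimpleGraph.fromRel (fun a b => a ∉ S ∧ b ∉ S)

lemma le_isoGraph_iff {V : Type*} (S : Finset V) (G : SimpleGraph V) :
    G ≤ isoGraph S ↔ ∀ v ∈ S, ∀ w, ¬ G.Adj v w := by
  constructor
  · intro h v hv w hadj
    have := h hadj
    simp only [isoGraph, SimpleGraph.fromRel_adj] at this
    rcases this.2 with ⟨h1, _⟩ | ⟨_, h1⟩ <;> exact h1 hv
  · intro h a b hadj
    simp only [isoGraph, SimpleGraph.fromRel_adj]
    refine ⟨G.ne_of_adj hadj, Or.inl ⟨fun ha => h a ha b hadj, fun hb => h b hb a hadj.symm⟩⟩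

lemma isoGraph_eq_bot_iff {V : Type*} [Fintype V] [DecidableEq V] (S : Finset V) :
    isoGraph S = ⊥ ↔ Fintype.card V - 1 ≤ S.card := by
  constructor
  · intro h
    by_contra hc
    push_neg at hc
    have hle : S.card ≤ Fintype.card V := Finset.card_le_univ S
    have hcompl : 2 ≤ Sᶜ.card := by rw [Finset.card_compl]; omega
    obtain ⟨a, ha, b, hb, hab⟩ := Finset.one_lt_card.1 hcompl
    have : (isoGraph S).Adj a b := by
      simp only [isoGraph, SimpleGraph.fromRel_adj]
      exact ⟨hab, Or.inl ⟨Finset.mem_compl.1 ha, Finset.mem_compl.1 hb⟩⟩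
    rw [h] at this
    exact this.elim
  · intro h
    ext a b
    simp only [isoGraph, SimpleGraph.fromRel_adj, SimpleGraph.bot_adj, iff_false, not_and,
      not_or, not_and]
    intro hab
    have hle : S.card ≤ Fintype.card V := Finset.card_le_univ S
    have hone : Sᶜ.card ≤ 1 := by rw [Finset.card_compl]; omega
    have key : ∀ x y : V, x ∉ S → y ∉ S → x = y := by
      intro x y hx hy
      exact Finset.card_le_one.1 hone x (Finset.mem_compl.2 hx) y (Finset.mem_compl.2 hy)
    constructor <;> intro ha hb
    · exact hab (key a b ha hb)
    · exact hab (key a b hb ha)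

lemma indicator_eq {V : Type*} [Fintype V] [DecidableEq V] (I : Finset V) :
    (if I = ∅ then 0 else (1 : ℤ))
      = ∑ S ∈ Finset.univ.powerset.filter (fun S : Finset V => S.Nonempty),
          (-1 : ℤ) ^ (S.card + 1) * (if S ⊆ I then 1 else 0) := by
  classical
  rw [Finset.sum_filter]
  have : ∀ S : Finset V, (if S.Nonempty then (-1:ℤ)^(S.card+1) * (if S ⊆ I then 1 else 0) else 0)
      = (if S ⊆ I then (-1:ℤ)^(S.card+1) else 0) + (if S = ∅ then 1 else 0) := by
    intro S
    rcases eq_or_ne S ∅ with rfl | hS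
    · simp
    · simp only [Finset.nonempty_iff_ne_empty.2 hS, if_true, hS, if_false, add_zero]
      split <;> ring
  simp_rw [this]
  rw [Finset.sum_add_distrib, Finset.sum_ite_eq' Finset.univ.powerset (∅ : Finset V) (fun _ => (1:ℤ))]
  simp only [Finset.mem_powerset, Finset.empty_subset, if_true]
  rw [← Finset.sum_filter]
  have hfil : Finset.univ.powerset.filter (fun S : Finset V => S ⊆ I) = I.powerset := by
    ext S; simp
  rw [hfil]
  have : ∑ S ∈ I.powerset, (-1:ℤ)^(S.card+1) = - ∑ S ∈ I.powerset, (-1:ℤ)^S.card := by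
    rw [← Finset.sum_neg_distrib]
    exact Finset.sum_congr rfl fun S _ => by ring
  rw [this, Finset.sum_powerset_neg_one_pow_card]
  split <;> ring

/-- The alternating-by-edge-count sum over all graphs on the labeled vertex set `{1,…,k}`
having at least one isolated vertex. -/
noncomputable def isolatedVertexSum (k : ℕ) : ℤ :=
  ∑ G ∈ Finset.univ.filter
      (fun G : SimpleGraph (Fin k) => ∃ v : Fin k, ∀ w : Fin k, ¬ G.Adj v w),
    ((-1 : ℤ)) ^ (Nat.card G.edgeSet)

set_option maxHeartbeats 1000000 in
lemma main_formula (k : ℕ) :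
    isolatedVertexSum k
      = ∑ S ∈ Finset.univ.powerset.filter (fun S : Finset (Fin k) => S.Nonempty),
          (-1 : ℤ) ^ (S.card + 1) * (if isoGraph S = ⊥ then 1 else 0) := by
  classical
  unfold isolatedVertexSum
  rw [Finset.sum_filter]
  have h1 : ∀ G : SimpleGraph (Fin k),
      (if (∃ v : Fin k, ∀ w : Fin k, ¬ G.Adj v w) then ((-1:ℤ))^(Nat.card G.edgeSet) else 0)
        = ∑ S ∈ Finset.univ.powerset.filter (fun S : Finset (Fin k) => S.Nonempty),
            (-1:ℤ)^(S.card+1) *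
              (if G ≤ isoGraph S then ((-1:ℤ))^(Nat.card G.edgeSet) else 0) := by
    intro G
    set I := Finset.univ.filter (fun v : Fin k => ∀ w, ¬ G.Adj v w) with hI
    have hcond : (∃ v : Fin k, ∀ w, ¬ G.Adj v w) ↔ I ≠ ∅ := by
      constructor
      · rintro ⟨v, hv⟩ h
        have hvI : v ∈ I := Finset.mem_filter.2 ⟨Finset.mem_univ v, hv⟩
        rw [h] at hvI
        exact absurd hvI (Finset.notMem_empty v)
      · intro h
        obtain ⟨v, hv⟩ := Finset.nonempty_iff_ne_empty.2 h
        exact ⟨v, (Finset.mem_filter.1 hv).2⟩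
    have hG : ∀ S : Finset (Fin k), (G ≤ isoGraph S ↔ S ⊆ I) := by
      intro S
      rw [le_isoGraph_iff]
      constructor
      · intro h v hv
        exact Finset.mem_filter.2 ⟨Finset.mem_univ v, h v hv⟩
      · intro h v hv w
        exact (Finset.mem_filter.1 (h hv)).2 w
    have hterm : ∀ S : Finset (Fin k),
        (-1:ℤ)^(S.card+1) * (if G ≤ isoGraph S then ((-1:ℤ))^(Nat.card G.edgeSet) else 0)
          = ((-1:ℤ)^(S.card+1) * (if S ⊆ I then 1 else 0)) * ((-1:ℤ))^(Nat.card G.edgeSet) := by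
      intro S
      by_cases hS : S ⊆ I
      · rw [if_pos ((hG S).2 hS), if_pos hS]; ring
      · rw [if_neg (fun h => hS ((hG S).1 h)), if_neg hS]; ring
    simp_rw [hterm]
    rw [← Finset.sum_mul, ← indicator_eq I]
    by_cases hex : (∃ v : Fin k, ∀ w, ¬ G.Adj v w)
    · rw [if_pos hex, if_neg (hcond.1 hex), one_mul]
    · rw [if_neg hex, if_pos (by by_contra h; exact hex (hcond.2 h)), zero_mul]
  simp_rw [h1]
  rw [Finset.sum_comm (s := (Finset.univ : Finset (SimpleGraph (Fin k))))
      (t := Finset.univ.powerset.filter (fun S : Finset (Fin k) => S.Nonempty))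
      (f := fun G S => (-1:ℤ)^(S.card+1) *
        (if G ≤ isoGraph S then ((-1:ℤ))^(Nat.card G.edgeSet) else 0))]
  refine Finset.sum_congr rfl fun S hS => ?_
  rw [← Finset.mul_sum, ← Finset.sum_filter, sum_le_graph]

/-- For `F` a single vertex (`f = 1`): for `k ≥ 2` the sum
`∑_G (-1)^{#E(G)}` over graphs on `{1,…,k}` with at least one isolated vertex equals
`(-1)^k (k-1)`; for `k = 1` it equals `1`; in particular it is nonzero for all `k ≥ 1`. -/
theorem stmt_18 (k : ℕ) :
    (2 ≤ k → isolatedVertexSum k = (-1 : ℤ) ^ k * (k - 1 : ℤ)) ∧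
    (isolatedVertexSum 1 = 1) ∧
    (1 ≤ k → isolatedVertexSum k ≠ 0) := by
  classical
  have hone : isolatedVertexSum 1 = 1 := by
    unfold isolatedVertexSum
    have hfil : (Finset.univ.filter
        (fun G : SimpleGraph (Fin 1) => ∃ v : Fin 1, ∀ w : Fin 1, ¬ G.Adj v w))
        = {(⊥ : SimpleGraph (Fin 1))} := by
      ext G
      have hGbot : G = ⊥ := by
        ext a b
        have : a = b := Subsingleton.elim a b
        subst this
        simp
      simp only [Finset.mem_filter, Finset.mem_univ, true_and, Finset.mem_singleton, hGbot]
      simp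
    rw [hfil, Finset.sum_singleton]
    simp
  have hge : ∀ k : ℕ, 2 ≤ k → isolatedVertexSum k = (-1 : ℤ) ^ k * (k - 1 : ℤ) := by
    intro k hk
    rw [main_formula]
    have hbot : ∀ S : Finset (Fin k),
        (isoGraph S = ⊥) ↔ (k - 1 ≤ S.card) := by
      intro S
      rw [isoGraph_eq_bot_iff]
      simp
    have hterm : ∀ S : Finset (Fin k),
        (-1:ℤ)^(S.card+1) * (if isoGraph S = ⊥ then (1:ℤ) else 0)
          = (if k - 1 ≤ S.card then (-1:ℤ)^(S.card+1) else 0) := by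
      intro S
      by_cases h : k - 1 ≤ S.card
      · rw [if_pos ((hbot S).2 h), if_pos h, mul_one]
      · rw [if_neg (fun hh => h ((hbot S).1 hh)), if_neg h, mul_zero]
    simp_rw [hterm]
    rw [← Finset.sum_filter]
    have hsplit : (Finset.univ.powerset.filter (fun S : Finset (Fin k) => S.Nonempty)).filter
          (fun S => k - 1 ≤ S.card)
        = (Finset.univ.powersetCard (k-1)) ∪ (Finset.univ.powersetCard k) := by
      ext S
      have hle : S.card ≤ k := le_trans (Finset.card_le_univ S) (by simp)
      constructor
      · intro hmem
        rw [Finset.mem_filter] at hmem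
        obtain ⟨hmem1, hcard⟩ := hmem
        rw [Finset.mem_union, Finset.mem_powersetCard, Finset.mem_powersetCard]
        by_cases h : S.card = k
        · exact Or.inr ⟨Finset.subset_univ S, h⟩
        · exact Or.inl ⟨Finset.subset_univ S, by omega⟩
      · intro hmem
        rw [Finset.mem_union, Finset.mem_powersetCard, Finset.mem_powersetCard] at hmem
        rw [Finset.mem_filter, Finset.mem_filter]
        have hc : S.card = k - 1 ∨ S.card = k := by
          rcases hmem with ⟨-, h⟩ | ⟨-, h⟩ <;> omega
        have hpos : 0 < S.card := by omega
        exact ⟨⟨Finset.mem_powerset.2 (Finset.subset_univ S), Finset.card_pos.1 hpos⟩, by omega⟩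
    have hdisj : Disjoint (Finset.univ.powersetCard (k-1) : Finset (Finset (Fin k)))
        (Finset.univ.powersetCard k) := by
      rw [Finset.disjoint_left]
      intro S hS1 hS2
      have c1 := (Finset.mem_powersetCard.1 hS1).2
      have c2 := (Finset.mem_powersetCard.1 hS2).2
      omega
    rw [hsplit, Finset.sum_union hdisj]
    have h1 : ∑ S ∈ (Finset.univ.powersetCard (k-1) : Finset (Finset (Fin k))),
        (-1:ℤ)^(S.card+1) = k * (-1:ℤ)^k := by
      have hcongr : ∀ S ∈ (Finset.univ.powersetCard (k-1) : Finset (Finset (Fin k))),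
          (-1:ℤ)^(S.card+1) = (-1:ℤ)^k := by
        intro S hS
        rw [(Finset.mem_powersetCard.1 hS).2]
        have h3 : k - 1 + 1 = k := by omega
        rw [h3]
      rw [Finset.sum_congr rfl hcongr, Finset.sum_const]
      rw [Finset.card_powersetCard, Finset.card_univ, Fintype.card_fin]
      have hch : k.choose (k-1) = k := by
        have := Nat.choose_symm (n := k) (k := 1) (by omega)
        rw [this, Nat.choose_one_right]
      rw [hch]
      ring
    have h2 : ∑ S ∈ (Finset.univ.powersetCard k : Finset (Finset (Fin k))),
        (-1:ℤ)^(S.card+1) = (-1:ℤ)^(k+1) := by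
      have huniv : (Finset.univ.powersetCard k : Finset (Finset (Fin k)))
          = {Finset.univ} := by
        ext S
        simp only [Finset.mem_powersetCard, Finset.subset_univ, true_and,
          Finset.mem_singleton]
        constructor
        · intro h
          apply Finset.eq_univ_of_card
          simp [h]
        · rintro rfl
          simp
      rw [huniv, Finset.sum_singleton, Finset.card_univ, Fintype.card_fin]
    rw [h1, h2]
    have hpw : (-1:ℤ)^(k+1) = -(-1:ℤ)^k := by ring
    rw [hpw]
    ring
  refine ⟨hge k, hone, ?_⟩
  intro hk1
  rcases Nat.lt_or_ge k 2 with h | h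
  · interval_cases k
    · rw [hone]; norm_num
  · rw [hge k h]
    have hk : (1:ℤ) ≤ (k:ℤ) - 1 + 1 := by exact_mod_cast Nat.one_le_iff_ne_zero.2 (by omega)
    have : ((k:ℤ) - 1) ≠ 0 := by
      have : (2:ℤ) ≤ k := by exact_mod_cast h
      omega
    intro hcontra
    rcases mul_eq_zero.1 hcontra with h' | h'
    · exact absurd h' (by positivity)
    · exact this h'
end
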